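/- Let σ : ℝ → ℝ be Lipschitz with constant τ_σ ≥ 0, applied to matrices entrywise. Fix K ≥ 1, matrices Ψ_i, Ψ_j ∈ ℝ^{n×n}, weight matrices W¹,…,W^K ∈ ℝ^{d×d}, and a common initial matrix H⁰ ∈ ℝ^{n×d}. Define recursively H_i^l = σ(Ψ_i H_i^{l−1} W^l) and H_j^l = σ(Ψ_j H_j^{l−1} W^l) for l = 1,…,K, with H_i^0 = H_j^0 = H⁰. Suppose τ_w, τ_h, τ_l ≥ 0 satisfy ‖W^l‖₂ ≤ τ_w for all l, ‖H_i^l‖_F ≤ τ_h for all 0 ≤ l ≤ K−1, and ‖Ψ_j‖₂ ≤ τ_l, and set b = τ_σ·τ_w·τ_l. Then ‖H_i^K − H_j^K‖_F ≤ (∑_{t=0}^{K−1} b^t) · τ_σ·τ_w·τ_h · ‖Ψ_i − Ψ_j‖₂; in particular, if b ≠ 1, then ‖H_i^K − H_j^K‖_F ≤ ((b^K − 1)/(b − 1)) · τ_σ·τ_w·τ_h · ‖Ψ_i − Ψ_j‖₂. -/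

import Mathlib

/-!
Writing `δₗ = ‖H_i^l − H_j^l‖_F`, the pre-activations of layer `l + 1` differ by
`(Ψᵢ − Ψⱼ) H_i^l W + Ψⱼ (H_i^l − H_j^l) W`. Since `‖A B‖_F ≤ ‖A‖₂ ‖B‖_F` (column by column) and
`‖B A‖_F ≤ ‖B‖_F ‖A‖₂`, this gives `δ_{l+1} ≤ τ_σ τ_w τ_h ‖Ψᵢ − Ψⱼ‖₂ + b δₗ`, and unrolling
this recursion from `δ₀ = 0` produces the geometric sum.
-/

/-- The ℓ2 operator norm (spectral norm) of a real matrix, i.e. the operator norm of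
the induced linear map between Euclidean spaces. -/
noncomputable def matOpNorm {n d : ℕ} (A : Matrix (Fin n) (Fin d) ℝ) : ℝ :=
  ‖LinearMap.toContinuousLinearMap (Matrix.toEuclideanLin A)‖

/-- The Frobenius norm of a real matrix: the square root of the sum of squares of its
entries. -/
noncomputable def frobNorm {n d : ℕ} (A : Matrix (Fin n) (Fin d) ℝ) : ℝ :=
  Real.sqrt (∑ i, ∑ j, (A i j) ^ 2)

open Finset Matrix

lemma matOpNorm_nonneg {m n : ℕ} (A : Matrix (Fin m) (Fin n) ℝ) : 0 ≤ matOpNorm A :=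
  norm_nonneg _

lemma matOpNorm_transpose {m n : ℕ} (A : Matrix (Fin m) (Fin n) ℝ) :
    matOpNorm Aᵀ = matOpNorm A := by
  rw [matOpNorm, matOpNorm, ← conjTranspose_eq_transpose_of_trivial,
    toEuclideanLin_conjTranspose_eq_adjoint, LinearMap.adjoint_toContinuousLinearMap]
  exact ContinuousLinearMap.adjoint.norm_map _

lemma frobNorm_nonneg {m n : ℕ} (A : Matrix (Fin m) (Fin n) ℝ) : 0 ≤ frobNorm A :=
  Real.sqrt_nonneg _

lemma frobNorm_zero {m n : ℕ} : frobNorm (0 : Matrix (Fin m) (Fin n) ℝ) = 0 := by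
  simp [frobNorm]

lemma frobNorm_transpose {m n : ℕ} (A : Matrix (Fin m) (Fin n) ℝ) :
    frobNorm Aᵀ = frobNorm A := by
  rw [frobNorm, frobNorm, sum_comm]
  rfl

lemma frobNorm_eq_frobenius_norm {m n : ℕ} (A : Matrix (Fin m) (Fin n) ℝ) :
    frobNorm A = @norm _ frobeniusSeminormedAddCommGroup.toNorm A := by
  rw [frobenius_norm_def, frobNorm, Real.sqrt_eq_rpow]
  simp_rw [Real.norm_eq_abs, Real.rpow_two, sq_abs]

lemma frobNorm_add_le {m n : ℕ} (A B : Matrix (Fin m) (Fin n) ℝ) :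
    frobNorm (A + B) ≤ frobNorm A + frobNorm B := by
  simp only [frobNorm_eq_frobenius_norm]
  exact @norm_add_le _ frobeniusSeminormedAddCommGroup.toSeminormedAddGroup A B

lemma frobNorm_sq_eq_sum_col {m n : ℕ} (A : Matrix (Fin m) (Fin n) ℝ) :
    frobNorm A ^ 2 = ∑ j, ‖(WithLp.toLp 2 (Aᵀ j) : EuclideanSpace ℝ (Fin m))‖ ^ 2 := by
  rw [frobNorm, Real.sq_sqrt (by positivity), sum_comm]
  simp [EuclideanSpace.norm_sq_eq]

lemma frobNorm_mul_le_matOpNorm_mul {l m n : ℕ} (A : Matrix (Fin l) (Fin m) ℝ)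
    (B : Matrix (Fin m) (Fin n) ℝ) : frobNorm (A * B) ≤ matOpNorm A * frobNorm B := by
  have hcol : ∀ j, ‖(WithLp.toLp 2 ((A * B)ᵀ j) : EuclideanSpace ℝ (Fin l))‖ ≤
      matOpNorm A * ‖(WithLp.toLp 2 (Bᵀ j) : EuclideanSpace ℝ (Fin m))‖ := fun j => by
    have hAB : (A * B)ᵀ j = A *ᵥ Bᵀ j := by ext i; simp [mul_apply, mulVec, dotProduct]
    simpa [hAB, matOpNorm] using
      (LinearMap.toContinuousLinearMap (toEuclideanLin A)).le_opNorm (WithLp.toLp 2 (Bᵀ j))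
  refine le_of_pow_le_pow_left₀ two_ne_zero
    (mul_nonneg (matOpNorm_nonneg A) (frobNorm_nonneg B)) ?_
  rw [mul_pow, frobNorm_sq_eq_sum_col, frobNorm_sq_eq_sum_col, mul_sum]
  gcongr with j
  rw [← mul_pow]
  exact pow_le_pow_left₀ (norm_nonneg _) (hcol j) 2

lemma frobNorm_mul_le_frobNorm_mul_matOpNorm {l m n : ℕ} (B : Matrix (Fin l) (Fin m) ℝ)
    (A : Matrix (Fin m) (Fin n) ℝ) : frobNorm (B * A) ≤ frobNorm B * matOpNorm A := by
  calc frobNorm (B * A) = frobNorm (Aᵀ * Bᵀ) := by rw [← transpose_mul, frobNorm_transpose]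
    _ ≤ matOpNorm Aᵀ * frobNorm Bᵀ := frobNorm_mul_le_matOpNorm_mul _ _
    _ = frobNorm B * matOpNorm A := by rw [matOpNorm_transpose, frobNorm_transpose, mul_comm]

lemma frobNorm_le_mul_of_abs_le {m n : ℕ} {A B : Matrix (Fin m) (Fin n) ℝ} {c : ℝ} (hc : 0 ≤ c)
    (h : ∀ i j, |A i j| ≤ c * |B i j|) : frobNorm A ≤ c * frobNorm B := by
  rw [frobNorm, frobNorm, ← Real.sqrt_sq hc, ← Real.sqrt_mul (sq_nonneg c)]
  refine Real.sqrt_le_sqrt ?_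
  simp_rw [mul_sum]
  gcongr with i _ j _
  simpa [mul_pow, sq_abs] using pow_le_pow_left₀ (abs_nonneg _) (h i j) 2

lemma frobNorm_map_sub_map_le {m n : ℕ} {σ : ℝ → ℝ} {τσ : ℝ} (hτσ : 0 ≤ τσ)
    (hσ : ∀ x y : ℝ, |σ x - σ y| ≤ τσ * |x - y|) (A B : Matrix (Fin m) (Fin n) ℝ) :
    frobNorm (A.map σ - B.map σ) ≤ τσ * frobNorm (A - B) :=
  frobNorm_le_mul_of_abs_le hτσ fun i j => hσ (A i j) (B i j)

lemma frobNorm_layer_sub_le {m n d e : ℕ} {σ : ℝ → ℝ} {τσ : ℝ} (hτσ : 0 ≤ τσ)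
    (hσ : ∀ x y : ℝ, |σ x - σ y| ≤ τσ * |x - y|) (Ψ Ψ' : Matrix (Fin m) (Fin n) ℝ)
    (H H' : Matrix (Fin n) (Fin d) ℝ) (W : Matrix (Fin d) (Fin e) ℝ) :
    frobNorm ((Ψ * H * W).map σ - (Ψ' * H' * W).map σ) ≤
      τσ * (matOpNorm (Ψ - Ψ') * frobNorm H + matOpNorm Ψ' * frobNorm (H - H')) * matOpNorm W := by
  have hsplit : Ψ * H * W - Ψ' * H' * W = ((Ψ - Ψ') * H + Ψ' * (H - H')) * W := by
    simp only [Matrix.sub_mul, Matrix.mul_sub, Matrix.add_mul]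
    abel
  calc frobNorm ((Ψ * H * W).map σ - (Ψ' * H' * W).map σ)
      ≤ τσ * frobNorm (((Ψ - Ψ') * H + Ψ' * (H - H')) * W) :=
        hsplit ▸ frobNorm_map_sub_map_le hτσ hσ _ _
    _ ≤ τσ * (frobNorm ((Ψ - Ψ') * H + Ψ' * (H - H')) * matOpNorm W) := by
        gcongr
        exact frobNorm_mul_le_frobNorm_mul_matOpNorm _ _
    _ ≤ τσ * ((matOpNorm (Ψ - Ψ') * frobNorm H + matOpNorm Ψ' * frobNorm (H - H')) *
          matOpNorm W) := by
        have hW := matOpNorm_nonneg W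
        gcongr
        exact (frobNorm_add_le _ _).trans
          (add_le_add (frobNorm_mul_le_matOpNorm_mul _ _) (frobNorm_mul_le_matOpNorm_mul _ _))
    _ = τσ * (matOpNorm (Ψ - Ψ') * frobNorm H + matOpNorm Ψ' * frobNorm (H - H')) *
          matOpNorm W := (mul_assoc _ _ _).symm

lemma le_geom_sum_mul_of_le_add_mul {f : ℕ → ℝ} {b c : ℝ} {K : ℕ} (hb : 0 ≤ b) (h0 : f 0 ≤ 0)
    (hstep : ∀ l < K, f (l + 1) ≤ c + b * f l) : f K ≤ (∑ t ∈ range K, b ^ t) * c := by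
  suffices ∀ l ≤ K, f l ≤ (∑ t ∈ range l, b ^ t) * c from this K le_rfl
  intro l hl
  induction l with
  | zero => simpa using h0
  | succ l ih =>
    calc f (l + 1) ≤ c + b * f l := hstep l hl
      _ ≤ c + b * ((∑ t ∈ range l, b ^ t) * c) := by gcongr; exact ih (by omega)
      _ = (∑ t ∈ range (l + 1), b ^ t) * c := by rw [geom_sum_succ]; ring

theorem multilayer_gnn_perturbation_bound_general {n d K : ℕ}
    (σ : ℝ → ℝ) (τσ : ℝ) (hτσ : 0 ≤ τσ)
    (hσ : ∀ x y : ℝ, |σ x - σ y| ≤ τσ * |x - y|)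
    (Ψi Ψj : Matrix (Fin n) (Fin n) ℝ) (W : Fin K → Matrix (Fin d) (Fin d) ℝ)
    (H0 : Matrix (Fin n) (Fin d) ℝ) (Hi Hj : ℕ → Matrix (Fin n) (Fin d) ℝ)
    (hHi0 : Hi 0 = H0) (hHj0 : Hj 0 = H0)
    (hHi : ∀ l : Fin K, Hi (l + 1) = ((Ψi * Hi l) * W l).map σ)
    (hHj : ∀ l : Fin K, Hj (l + 1) = ((Ψj * Hj l) * W l).map σ)
    (τw τh τl : ℝ) (hτw : 0 ≤ τw) (hτh : 0 ≤ τh) (hτl : 0 ≤ τl)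
    (hW : ∀ l : Fin K, matOpNorm (W l) ≤ τw)
    (hH : ∀ l : ℕ, l ≤ K - 1 → frobNorm (Hi l) ≤ τh)
    (hΨj : matOpNorm Ψj ≤ τl) :
    frobNorm (Hi K - Hj K) ≤
      (∑ t ∈ Finset.range K, (τσ * τw * τl) ^ t) * (τσ * τw * τh) * matOpNorm (Ψi - Ψj) ∧
    (τσ * τw * τl ≠ 1 →
      frobNorm (Hi K - Hj K) ≤
        (((τσ * τw * τl) ^ K - 1) / (τσ * τw * τl - 1)) * (τσ * τw * τh) *
          matOpNorm (Ψi - Ψj)) := by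
  have hstep : ∀ l < K, frobNorm (Hi (l + 1) - Hj (l + 1)) ≤
      τσ * τw * τh * matOpNorm (Ψi - Ψj) + τσ * τw * τl * frobNorm (Hi l - Hj l) := by
    intro l hl
    rw [hHi ⟨l, hl⟩, hHj ⟨l, hl⟩]
    calc _ ≤ τσ * (matOpNorm (Ψi - Ψj) * frobNorm (Hi l) + matOpNorm Ψj * frobNorm (Hi l - Hj l)) *
          matOpNorm (W ⟨l, hl⟩) := frobNorm_layer_sub_le hτσ hσ _ _ _ _ _
      _ ≤ τσ * (matOpNorm (Ψi - Ψj) * τh + τl * frobNorm (Hi l - Hj l)) * τw := by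
          have hΔ := matOpNorm_nonneg (Ψi - Ψj)
          have hδ := frobNorm_nonneg (Hi l - Hj l)
          gcongr
          exacts [matOpNorm_nonneg _, hH l (by omega), hW _]
      _ = _ := by ring
  have hbound := le_geom_sum_mul_of_le_add_mul (f := fun l => frobNorm (Hi l - Hj l))
    (by positivity) (by rw [hHi0, hHj0, sub_self, frobNorm_zero]) hstep
  rw [← mul_assoc] at hbound
  exact ⟨hbound, fun hb => by rwa [← geom_sum_eq hb]⟩

/-- Multi-layer GNN perturbation bound: for two `K`-layer graph convolutional networks
sharing the weights `W¹,…,W^K` and the initial features `H⁰`, driven by graph filters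
`Ψᵢ` and `Ψⱼ` respectively, with `b = τ_σ τ_w τ_l`,
`‖H_i^K − H_j^K‖_F ≤ (∑_{t<K} b^t) · τ_σ τ_w τ_h · ‖Ψᵢ − Ψⱼ‖₂`, and if `b ≠ 1` this
equals `((b^K − 1)/(b − 1)) · τ_σ τ_w τ_h · ‖Ψᵢ − Ψⱼ‖₂`. -/
theorem multilayer_gnn_perturbation_bound {n d K : ℕ} (hK : 1 ≤ K)
    (σ : ℝ → ℝ) (τσ : ℝ) (hτσ : 0 ≤ τσ)
    (hσ : ∀ x y : ℝ, |σ x - σ y| ≤ τσ * |x - y|)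
    (Ψi Ψj : Matrix (Fin n) (Fin n) ℝ) (W : Fin K → Matrix (Fin d) (Fin d) ℝ)
    (H0 : Matrix (Fin n) (Fin d) ℝ) (Hi Hj : ℕ → Matrix (Fin n) (Fin d) ℝ)
    (hHi0 : Hi 0 = H0) (hHj0 : Hj 0 = H0)
    (hHi : ∀ l : Fin K, Hi (l + 1) = ((Ψi * Hi l) * W l).map σ)
    (hHj : ∀ l : Fin K, Hj (l + 1) = ((Ψj * Hj l) * W l).map σ)
    (τw τh τl : ℝ) (hτw : 0 ≤ τw) (hτh : 0 ≤ τh) (hτl : 0 ≤ τl)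
    (hW : ∀ l : Fin K, matOpNorm (W l) ≤ τw)
    (hH : ∀ l : ℕ, l ≤ K - 1 → frobNorm (Hi l) ≤ τh)
    (hΨj : matOpNorm Ψj ≤ τl) :
    frobNorm (Hi K - Hj K) ≤
      (∑ t ∈ Finset.range K, (τσ * τw * τl) ^ t) * (τσ * τw * τh) * matOpNorm (Ψi - Ψj) ∧
    (τσ * τw * τl ≠ 1 →
      frobNorm (Hi K - Hj K) ≤
        (((τσ * τw * τl) ^ K - 1) / (τσ * τw * τl - 1)) * (τσ * τw * τh) *
          matOpNorm (Ψi - Ψj)) :=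
  multilayer_gnn_perturbation_bound_general σ τσ hτσ hσ Ψi Ψj W H0 Hi Hj hHi0 hHj0 hHi hHj τw τh τl
    hτw hτh hτl hW hH hΨj
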